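/- arXiv:2109.09414 — 9 statements merged into one kernel-verified Lean document; each statement's English description precedes it below -/
import Mathlib

section
/- If M and N are closed subspaces of a Banach space X such that every m ∈ M is Birkhoff–James orthogonal to every n ∈ N, then M ∩ N = {0} and M + N is a closed subspace. -/
theorem stmt_5 {𝕜 X : Type*} [RCLike 𝕜] [NormedAddCommGroup X] [NormedSpace 𝕜 X]
    [CompleteSpace X] (M N : Submodule 𝕜 X)
    (hM : IsClosed (M : Set X)) (hN : IsClosed (N : Set X))
    (hMN : ∀ m ∈ M, ∀ n ∈ N, ∀ l : 𝕜, ‖m + l • n‖ ≥ ‖m‖) :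
    M ⊓ N = ⊥ ∧ IsClosed ((M ⊔ N : Submodule 𝕜 X) : Set X) := by
  constructor
  · ext x
    simp only [Submodule.mem_inf, Submodule.mem_bot]
    constructor
    · rintro ⟨hxM, hxN⟩
      have h : ‖x‖ ≤ 0 := by
        calc ‖x‖ ≤ ‖x + (-1:𝕜) • x‖ := hMN x hxM x hxN (-1)
        _ = 0 := by simp
      simpa using le_antisymm h (norm_nonneg x)
    · rintro rfl; simp
  · apply IsSeqClosed.isClosed
    intro x p hx hxp
    have hdec : ∀ k, ∃ m ∈ M, ∃ n ∈ N, m + n = x k := fun k => Submodule.mem_sup.mp (hx k)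
    choose m hm n hn hmn using hdec
    have key : ∀ a b : X, a ∈ M → b ∈ N → ‖a‖ ≤ ‖a + b‖ := by
      intro a b ha hb
      have := hMN a ha b hb 1
      simpa using this
    have hcx : CauchySeq x := hxp.cauchySeq
    have hcm : CauchySeq m := by
      rw [Metric.cauchySeq_iff] at hcx ⊢
      intro ε hε
      obtain ⟨K, hK⟩ := hcx ε hε
      refine ⟨K, fun a ha b hb => ?_⟩
      have h1 : ‖m a - m b‖ ≤ ‖x a - x b‖ := by
        have hx' : x a - x b = (m a - m b) + (n a - n b) := by
          rw [← hmn a, ← hmn b]; abel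
        rw [hx']
        exact key _ _ (sub_mem (hm a) (hm b)) (sub_mem (hn a) (hn b))
      calc dist (m a) (m b) = ‖m a - m b‖ := dist_eq_norm _ _
        _ ≤ ‖x a - x b‖ := h1
        _ = dist (x a) (x b) := (dist_eq_norm _ _).symm
        _ < ε := hK a ha b hb
    obtain ⟨mL, hmLM, hmL⟩ := cauchySeq_tendsto_of_isComplete hM.isComplete hm hcm
    have hnt : Filter.Tendsto n Filter.atTop (nhds (p - mL)) := by
      have hn' : n = fun k => x k - m k := by
        funext k; rw [← hmn k]; abel
      rw [hn']
      exact hxp.sub hmL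
    have hpN : p - mL ∈ N := hN.isSeqClosed hn hnt
    have hp : p = mL + (p - mL) := by abel
    rw [hp]
    exact Submodule.mem_sup.mpr ⟨mL, hmLM, p - mL, hpN, rfl⟩
end

section
/- If X is a normed space of dimension at least n, then for any vectors x₁, …, x_{n−1} ∈ X there exists a nonzero vector x_n such that x_i ⊥ x_n (Birkhoff–James) for all 1 ≤ i ≤ n − 1. -/
theorem stmt_8 {𝕜 X : Type*} [RCLike 𝕜] [NormedAddCommGroup X] [NormedSpace 𝕜 X]
    (n : ℕ) (hn : 2 ≤ n) (hdim : (n : Cardinal) ≤ Module.rank 𝕜 X)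
    (x : Fin (n - 1) → X) :
    ∃ z : X, z ≠ 0 ∧ ∀ i, ∀ l : 𝕜, ‖x i + l • z‖ ≥ ‖x i‖ := by
  choose f hf1 hf2 using fun i => exists_dual_vector'' 𝕜 (x i)
  set T : X →ₗ[𝕜] (Fin (n - 1) → 𝕜) := LinearMap.pi (fun i => (f i).toLinearMap) with hT
  have hnotinj : ¬ Function.Injective T := by
    intro h
    have h1 := LinearMap.lift_rank_le_of_injective T h
    have h2 : Module.rank 𝕜 (Fin (n - 1) → 𝕜) = (n - 1 : ℕ) := by
      simp [rank_fun']
    rw [h2] at h1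
    rw [Cardinal.lift_natCast, Cardinal.lift_le_nat_iff] at h1
    have h3 : (n : Cardinal) ≤ ((n - 1 : ℕ) : Cardinal) := hdim.trans h1
    have : n ≤ n - 1 := by exact_mod_cast h3
    omega
  rw [Function.not_injective_iff] at hnotinj
  obtain ⟨a, b, hab, hne⟩ := hnotinj
  refine ⟨a - b, sub_ne_zero_of_ne hne, fun i l => ?_⟩
  have hker : f i (a - b) = 0 := by
    have := congrFun hab i
    simp [hT] at this
    simp [map_sub, this]
  have hval : f i (x i + l • (a - b)) = (‖x i‖ : 𝕜) := by
    simp [map_add, map_smul, hker, hf2 i]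
  have := (f i).le_opNorm (x i + l • (a - b))
  calc ‖x i‖ = ‖f i (x i + l • (a - b))‖ := by rw [hval]; simp
    _ ≤ ‖f i‖ * ‖x i + l • (a - b)‖ := (f i).le_opNorm _
    _ ≤ 1 * ‖x i + l • (a - b)‖ := by
        apply mul_le_mul_of_nonneg_right (hf1 i) (norm_nonneg _)
    _ = ‖x i + l • (a - b)‖ := one_mul _
end

section
/- In a smooth finite-dimensional normed space X of dimension n ≥ 2, if nonzero vectors x₁,…,x_{n−1} satisfy x_i ⊥ x_j for i < j, then the set of nonzero vectors y with x_i ⊥ y for all i spans a unique one-dimensional subspace. -/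
/-!
Birkhoff–James orthogonality `x ⊥ y` says that the quotient norm of `x` in `X ⧸ 𝕜y` is `‖x‖`, so
Hahn–Banach on the quotient yields a norming functional of `x` vanishing at `y`. In a smooth space
that functional is the unique norming functional `fₓ`, hence `x ⊥ y ↔ fₓ y = 0`. Thus the vectors `y`
with every `xᵢ ⊥ y` form the common kernel of the `f_{xᵢ}`; since `f_{xᵢ} xⱼ = 0` for `i < j`
and `f_{xᵢ} xᵢ = ‖xᵢ‖ ≠ 0`, the matrix `(f_{xᵢ} xⱼ)` is triangular and invertible, so the `n - 1`
functionals are independent and their common kernel is a line.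
-/

open Module

def BirkhoffOrthogonal (𝕜 : Type*) {X : Type*} [Norm X] [SMul 𝕜 X] [Add X] (x y : X) : Prop :=
  ∀ l : 𝕜, ‖x‖ ≤ ‖x + l • y‖

section Triangular

variable {K V ι : Type*} [Field K] [AddCommGroup V] [Module K V] [Fintype ι] [LinearOrder ι]

theorem LinearMap.pi_surjective_of_triangular (f : ι → V →ₗ[K] K) (v : ι → V)
    (hlt : ∀ i j, i < j → f i (v j) = 0) (hdiag : ∀ i, f i (v i) ≠ 0) :
    Function.Surjective (LinearMap.pi f) := by
  classical
  let A : Matrix ι ι K := .of fun i j => f i (v j)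
  have hA : IsUnit A := by
    rw [Matrix.isUnit_iff_isUnit_det, Matrix.det_of_isLowerTriangular A hlt, isUnit_iff_ne_zero]
    exact Finset.prod_ne_zero_iff.2 fun i _ => hdiag i
  intro t
  obtain ⟨c, hc⟩ := Matrix.mulVec_surjective_iff_isUnit.2 hA t
  refine ⟨∑ j, c j • v j, funext fun i => ?_⟩
  simp [← hc, A, Matrix.mulVec, dotProduct, mul_comm]

theorem finrank_ker_pi_add_card_of_triangular [FiniteDimensional K V] (f : ι → V →ₗ[K] K)
    (v : ι → V) (hlt : ∀ i j, i < j → f i (v j) = 0) (hdiag : ∀ i, f i (v i) ≠ 0) :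
    finrank K (LinearMap.ker (LinearMap.pi f)) + Fintype.card ι = finrank K V := by
  rw [← (LinearMap.pi f).finrank_range_add_finrank_ker,
    LinearMap.range_eq_top.2 (LinearMap.pi_surjective_of_triangular f v hlt hdiag),
    finrank_top, Module.finrank_fintype_fun_eq_card, add_comm]

end Triangular

theorem Submodule.exists_ne_zero_eq_smul_iff_of_finrank_eq_one {K V : Type*} [Field K]
    [AddCommGroup V] [Module K V] {W : Submodule K V} (hW : finrank K W = 1) :
    ∃ z : V, z ≠ 0 ∧ ∀ y : V, y ∈ W ∧ y ≠ 0 ↔ ∃ c : K, c ≠ 0 ∧ y = c • z := by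
  obtain ⟨z, hzW, hz0⟩ := W.exists_mem_ne_zero_of_ne_bot fun h => by
    rw [h, finrank_bot] at hW; exact zero_ne_one hW
  refine ⟨z, hz0, fun y => ?_⟩
  rw [eq_span_singleton_of_mem_of_finrank_eq_one hW hzW hz0, Submodule.mem_span_singleton]
  constructor
  · rintro ⟨⟨c, rfl⟩, hy⟩
    exact ⟨c, left_ne_zero_of_smul hy, rfl⟩
  · rintro ⟨c, hc, rfl⟩
    exact ⟨⟨c, rfl⟩, smul_ne_zero hc hz0⟩

section BirkhoffOrthogonal

variable {𝕜 X : Type*} [RCLike 𝕜] [NormedAddCommGroup X] [NormedSpace 𝕜 X] {x y : X}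

theorem BirkhoffOrthogonal.norm_mkQ (hxy : BirkhoffOrthogonal 𝕜 x y) :
    ‖(𝕜 ∙ y).mkQ x‖ = ‖x‖ := by
  refine le_antisymm (Submodule.Quotient.norm_mk_le _ x) ?_
  refine QuotientAddGroup.le_norm_iff.2 fun m hm => ?_
  obtain ⟨l, hl⟩ := Submodule.mem_span_singleton.1 ((Submodule.Quotient.eq _).1 hm)
  rw [sub_eq_iff_eq_add'.1 hl.symm]
  exact hxy l

theorem BirkhoffOrthogonal.exists_dual_vector (hxy : BirkhoffOrthogonal 𝕜 x y) (hx : x ≠ 0) :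
    ∃ g : StrongDual 𝕜 X, ‖g‖ = 1 ∧ g x = ‖x‖ ∧ g y = 0 := by
  obtain ⟨g, hg1, hgx⟩ :=
    _root_.exists_dual_vector 𝕜 ((𝕜 ∙ y).mkQ x) (by rwa [hxy.norm_mkQ, norm_ne_zero_iff])
  rw [hxy.norm_mkQ] at hgx
  have hle : ‖g ∘L (𝕜 ∙ y).mkQL‖ ≤ 1 :=
    ContinuousLinearMap.opNorm_le_bound _ zero_le_one fun z =>
      calc ‖g ((𝕜 ∙ y).mkQ z)‖ ≤ ‖g‖ * ‖(𝕜 ∙ y).mkQ z‖ := g.le_opNorm _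
        _ ≤ 1 * ‖z‖ := by rw [hg1]; gcongr; exact Submodule.Quotient.norm_mk_le _ z
  refine ⟨g ∘L (𝕜 ∙ y).mkQL, le_antisymm hle ?_, hgx, ?_⟩
  · have h := (g ∘L (𝕜 ∙ y).mkQL).le_opNorm x
    rw [ContinuousLinearMap.comp_apply, Submodule.mkQL_apply, hgx, RCLike.norm_ofReal,
      abs_norm] at h
    exact le_of_mul_le_mul_right (by simpa using h) (norm_pos_iff.2 hx)
  · simp [(Submodule.Quotient.mk_eq_zero _).2 (Submodule.mem_span_singleton_self y)]

theorem birkhoffOrthogonal_of_apply_eq_zero {f : StrongDual 𝕜 X} (hf : ‖f‖ ≤ 1)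
    (hfx : f x = ‖x‖) (hfy : f y = 0) : BirkhoffOrthogonal 𝕜 x y := fun l =>
  calc ‖x‖ = ‖f (x + l • y)‖ := by simp [hfx, hfy]
    _ ≤ ‖f‖ * ‖x + l • y‖ := f.le_opNorm _
    _ ≤ ‖x + l • y‖ := mul_le_of_le_one_left (norm_nonneg _) hf

theorem birkhoffOrthogonal_iff_apply_eq_zero (hx : x ≠ 0) {f : StrongDual 𝕜 X}
    (hf : ‖f‖ = 1 ∧ f x = ‖x‖) (huniq : ∀ g : StrongDual 𝕜 X, ‖g‖ = 1 ∧ g x = ‖x‖ → g = f) :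
    BirkhoffOrthogonal 𝕜 x y ↔ f y = 0 := by
  refine ⟨fun hxy => ?_, birkhoffOrthogonal_of_apply_eq_zero hf.1.le hf.2⟩
  obtain ⟨g, hg1, hgx, hgy⟩ := hxy.exists_dual_vector hx
  rwa [← huniq g ⟨hg1, hgx⟩]

end BirkhoffOrthogonal

theorem stmt_9 {𝕜 X : Type*} [RCLike 𝕜] [NormedAddCommGroup X] [NormedSpace 𝕜 X]
    [FiniteDimensional 𝕜 X] {n : ℕ} (hn : 2 ≤ n) (hdim : Module.finrank 𝕜 X = n)
    (hsmooth : ∀ x : X, x ≠ 0 → ∃! f : X →L[𝕜] 𝕜, ‖f‖ = 1 ∧ f x = (‖x‖ : 𝕜))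
    (x : Fin (n - 1) → X) (hx0 : ∀ i, x i ≠ 0)
    (hperp : ∀ i j, i < j → ∀ l : 𝕜, ‖x i + l • x j‖ ≥ ‖x i‖) :
    ∃ z : X, z ≠ 0 ∧ ∀ y : X,
      (y ≠ 0 ∧ ∀ i, ∀ l : 𝕜, ‖x i + l • y‖ ≥ ‖x i‖) ↔
        ∃ c : 𝕜, c ≠ 0 ∧ y = c • z := by
  choose f hf using fun i => hsmooth (x i) (hx0 i)
  have horth (i) (y : X) : BirkhoffOrthogonal 𝕜 (x i) y ↔ f i y = 0 :=
    birkhoffOrthogonal_iff_apply_eq_zero (hx0 i) (hf i).1 (hf i).2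
  let Φ : X →ₗ[𝕜] Fin (n - 1) → 𝕜 := LinearMap.pi fun i => (f i : X →ₗ[𝕜] 𝕜)
  have hker : finrank 𝕜 (LinearMap.ker Φ) = 1 := by
    have h : finrank 𝕜 (LinearMap.ker Φ) + Fintype.card (Fin (n - 1)) = finrank 𝕜 X :=
      finrank_ker_pi_add_card_of_triangular _ x (fun i j hij => (horth i _).1 (hperp i j hij))
        fun i => by simpa [(hf i).1.2] using hx0 i
    rw [Fintype.card_fin, hdim] at h
    omega
  obtain ⟨z, hz0, hz⟩ := Submodule.exists_ne_zero_eq_smul_iff_of_finrank_eq_one hker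
  refine ⟨z, hz0, fun y => ?_⟩
  rw [← hz, and_comm, LinearMap.mem_ker]
  simp [Φ, funext_iff, ← horth, BirkhoffOrthogonal]
end

section
/- If the unit sphere of a normed space X contains a nondegenerate line segment, then there exist two linearly independent unit vectors z₁, z₂ such that for every vector w, z₁ ⊥ w if and only if z₂ ⊥ w (their Birkhoff–James orthogonality neighborhoods coincide). -/
theorem stmt_11 {𝕜 X : Type*} [RCLike 𝕜] [NormedAddCommGroup X] [NormedSpace 𝕜 X]
    {x y : X} (hx : ‖x‖ = 1) (hy : ‖y‖ = 1) (hxy : x ≠ y)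
    (hseg : ∀ t : ℝ, t ∈ Set.Icc (0 : ℝ) 1 → ‖(t : 𝕜) • x + ((1 - t : ℝ) : 𝕜) • y‖ = 1) :
    ∃ z₁ z₂ : X, LinearIndependent 𝕜 ![z₁, z₂] ∧ ‖z₁‖ = 1 ∧ ‖z₂‖ = 1 ∧
      ∀ w : X, (∀ l : 𝕜, ‖z₁ + l • w‖ ≥ ‖z₁‖) ↔ (∀ l : 𝕜, ‖z₂ + l • w‖ ≥ ‖z₂‖) := by
  have hy0 : y ≠ 0 := by intro h; rw [h, norm_zero] at hy; norm_num at hy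
  set z₁ : X := (1/3 : 𝕜) • x + (2/3 : 𝕜) • y with hz₁def
  set z₂ : X := (2/3 : 𝕜) • x + (1/3 : 𝕜) • y with hz₂def
  have hhalf : ‖(1/2 : 𝕜)‖ = (1/2 : ℝ) := by
    rw [norm_div, norm_one, RCLike.norm_ofNat]
  have hz1 : ‖z₁‖ = 1 := by
    have h := hseg (1/3) (by norm_num)
    have e1 : ((1/3 : ℝ) : 𝕜) = (1/3 : 𝕜) := by push_cast; ring
    have e2 : ((1 - 1/3 : ℝ) : 𝕜) = (2/3 : 𝕜) := by push_cast; ring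
    rwa [e1, e2] at h
  have hz2 : ‖z₂‖ = 1 := by
    have h := hseg (2/3) (by norm_num)
    have e1 : ((2/3 : ℝ) : 𝕜) = (2/3 : 𝕜) := by push_cast; ring
    have e2 : ((1 - 2/3 : ℝ) : 𝕜) = (1/3 : 𝕜) := by push_cast; ring
    rwa [e1, e2] at h
  -- x, y are linearly independent
  have hlixy : ∀ s t : 𝕜, s • x + t • y = 0 → s = 0 ∧ t = 0 := by
    intro s t h
    by_cases hs : s = 0
    · refine ⟨hs, ?_⟩
      rw [hs, zero_smul, zero_add] at h
      exact (smul_eq_zero.mp h).resolve_right hy0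
    · exfalso
      set μ : 𝕜 := -t / s with hμdef
      have hxμ : x = μ • y := by
        have : s • x = -(t • y) := by linear_combination (norm := module) h
        calc x = s⁻¹ • (s • x) := by rw [smul_smul, inv_mul_cancel₀ hs, one_smul]
        _ = μ • y := by rw [this, hμdef, smul_neg, smul_smul]; module
      have hμ1 : ‖μ‖ = 1 := by
        have := hx
        rw [hxμ, norm_smul, hy, mul_one] at this
        exact this
      have hseg2 := hseg (1/2) (by norm_num)
      have e1 : ((1/2 : ℝ) : 𝕜) = (1/2 : 𝕜) := by push_cast; ring
      have e2 : ((1 - 1/2 : ℝ) : 𝕜) = (1/2 : 𝕜) := by push_cast; ring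
      rw [e1, e2, hxμ, smul_smul] at hseg2
      have hcomb : (1/2 * μ) • y + (1/2 : 𝕜) • y = ((μ + 1)/2) • y := by module
      rw [hcomb, norm_smul, hy, mul_one] at hseg2
      have hsum : ‖μ + 1‖ = 2 := by
        rw [norm_div, RCLike.norm_ofNat] at hseg2
        linarith
      have hre : RCLike.re μ * RCLike.re μ + RCLike.im μ * RCLike.im μ = 1 := by
        rw [← RCLike.normSq_apply, RCLike.normSq_eq_def', hμ1]; norm_num
      have hre2 : (RCLike.re μ + 1) * (RCLike.re μ + 1) + RCLike.im μ * RCLike.im μ = 4 := by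
        have := hsum
        have h4 : RCLike.re (μ + 1) * RCLike.re (μ + 1) + RCLike.im (μ + 1) * RCLike.im (μ + 1) = 4 := by
          rw [← RCLike.normSq_apply, RCLike.normSq_eq_def', hsum]; norm_num
        simpa using h4
      have hreμ : RCLike.re μ = 1 := by nlinarith
      have himμ : RCLike.im μ = 0 := by nlinarith
      have : μ = 1 := by
        apply RCLike.ext <;> simp [hreμ, himμ]
      rw [this, one_smul] at hxμ
      exact hxy hxμ
  refine ⟨z₁, z₂, ?_, hz1, hz2, ?_⟩
  · rw [LinearIndependent.pair_iff]
    intro s t h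
    rw [hz₁def, hz₂def] at h
    have h' : (s * (1/3) + t * (2/3)) • x + (s * (2/3) + t * (1/3)) • y = 0 := by
      linear_combination (norm := module) h
    obtain ⟨e1, e2⟩ := hlixy _ _ h'
    constructor
    · linear_combination 2 * e2 - e1
    · linear_combination 2 * e1 - e2
  · intro w
    have key : ∀ (u v : X), ‖u‖ = 1 → (∀ l : 𝕜, ‖(1/2 : 𝕜) • u + (1/2 : 𝕜) • v + l • w‖ ≥ 1) →
        ∀ l : 𝕜, ‖v + l • w‖ ≥ 1 := by
      intro u v hu h l
      by_contra hlt
      push_neg at hlt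
      have hid : (1/2 : 𝕜) • u + (1/2 : 𝕜) • v + (l/2) • w
          = (1/2 : 𝕜) • u + (1/2 : 𝕜) • (v + l • w) := by module
      have hb : ‖(1/2 : 𝕜) • u + (1/2 : 𝕜) • v + (l/2) • w‖ < 1 := by
        rw [hid]
        calc ‖(1/2 : 𝕜) • u + (1/2 : 𝕜) • (v + l • w)‖
            ≤ ‖(1/2 : 𝕜) • u‖ + ‖(1/2 : 𝕜) • (v + l • w)‖ := norm_add_le _ _
          _ = 1/2 * ‖u‖ + 1/2 * ‖v + l • w‖ := by rw [norm_smul, norm_smul, hhalf]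
          _ < 1 := by rw [hu]; linarith
      exact absurd (h (l/2)) (not_le.mpr hb)
    constructor
    · intro h1 l
      rw [hz2]
      have hid : z₁ = (1/2 : 𝕜) • y + (1/2 : 𝕜) • z₂ := by
        rw [hz₁def, hz₂def]; module
      refine key y z₂ hy (fun l' => ?_) l
      have := h1 l'
      rw [hz1] at this
      calc (1:ℝ) ≤ ‖z₁ + l' • w‖ := this
        _ = ‖(1/2:𝕜) • y + (1/2:𝕜) • z₂ + l' • w‖ := by rw [← hid]
    · intro h2 l
      rw [hz1]
      have hid : z₂ = (1/2 : 𝕜) • x + (1/2 : 𝕜) • z₁ := by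
        rw [hz₁def, hz₂def]; module
      refine key x z₁ hx (fun l' => ?_) l
      have := h2 l'
      rw [hz2] at this
      calc (1:ℝ) ≤ ‖z₂ + l' • w‖ := this
        _ = ‖(1/2:𝕜) • x + (1/2:𝕜) • z₁ + l' • w‖ := by rw [← hid]
end

section
/- If unit vectors z₁ and z₂ in a normed space X satisfy the condition that the set of supporting functionals at z₁ equals the set of supporting functionals at z₂, then {x : z₁ ⊥ x} = {x : z₂ ⊥ x}. -/
/-!
A supporting functional `f` at `z` with `f x = 0` witnesses `z ⊥ x`, since
`‖z‖ = f (z + λ • x) ≤ ‖z + λ • x‖`. Conversely, `z ⊥ x` says exactly that `z` keeps its norm in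
the quotient `X ⧸ span {x}`, so a Hahn–Banach norming functional of `z` there, pulled back to `X`,
is a supporting functional at `z` vanishing on `x`. Hence `z ⊥ x` depends only on the set of
supporting functionals at `z`.
-/

open Metric

section BirkhoffOrthogonal

variable {𝕜 X : Type*} [RCLike 𝕜] [SeminormedAddCommGroup X] [NormedSpace 𝕜 X] {z x : X}

lemma norm_le_norm_add_smul_of_dual {f : X →L[𝕜] 𝕜} (hf : ‖f‖ ≤ 1) (hfz : f z = ‖z‖)
    (hfx : f x = 0) (l : 𝕜) : ‖z‖ ≤ ‖z + l • x‖ :=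
  calc ‖z‖ = ‖f (z + l • x)‖ := by simp [hfz, hfx]
    _ ≤ ‖f‖ * ‖z + l • x‖ := f.le_opNorm _
    _ ≤ ‖z + l • x‖ := mul_le_of_le_one_left (norm_nonneg _) hf

lemma norm_mk_span_singleton_eq (h : ∀ l : 𝕜, ‖z‖ ≤ ‖z + l • x‖) :
    ‖(Submodule.Quotient.mk z : X ⧸ 𝕜 ∙ x)‖ = ‖z‖ := by
  refine le_antisymm (Submodule.Quotient.norm_mk_le _ z) ?_
  change ‖z‖ ≤ ‖(z : X ⧸ (𝕜 ∙ x).toAddSubgroup)‖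
  rw [QuotientAddGroup.norm_mk, le_infDist ⟨0, zero_mem _⟩]
  intro y hy
  obtain ⟨l, rfl⟩ := Submodule.mem_span_singleton.mp hy
  simpa [dist_eq_norm, sub_eq_add_neg, ← neg_smul] using h (-l)

lemma exists_dual_vanishing_of_norm_le_norm_add_smul (h : ∀ l : 𝕜, ‖z‖ ≤ ‖z + l • x‖) :
    ∃ f : X →L[𝕜] 𝕜, ‖f‖ ≤ 1 ∧ f z = ‖z‖ ∧ f x = 0 := by
  set π := (𝕜 ∙ x).mkQL
  obtain ⟨g, hg, hgz⟩ := exists_dual_vector'' 𝕜 (π z)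
  refine ⟨g ∘L π, ?_, ?_, ?_⟩
  · refine (g ∘L π).opNorm_le_bound zero_le_one fun y ↦ ?_
    calc ‖g (π y)‖ ≤ ‖g‖ * ‖π y‖ := g.le_opNorm _
      _ ≤ 1 * ‖y‖ := mul_le_mul hg (Submodule.Quotient.norm_mk_le _ y) (norm_nonneg _) zero_le_one
  · simpa [π, norm_mk_span_singleton_eq h] using hgz
  · simp [π, (Submodule.Quotient.mk_eq_zero _).mpr (Submodule.mem_span_singleton_self x)]

theorem birkhoffOrthogonal_iff_exists_supporting_dual (hz : ‖z‖ = 1) :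
    (∀ l : 𝕜, ‖z + l • x‖ ≥ ‖z‖) ↔ ∃ f : X →L[𝕜] 𝕜, (‖f‖ = 1 ∧ f z = 1) ∧ f x = 0 := by
  constructor
  · intro h
    obtain ⟨f, hf, hfz, hfx⟩ := exists_dual_vanishing_of_norm_le_norm_add_smul h
    refine ⟨f, ⟨le_antisymm hf ?_, by simp [hfz, hz]⟩, hfx⟩
    simpa [hfz, hz] using f.le_opNorm z
  · rintro ⟨f, ⟨hf, hfz⟩, hfx⟩
    exact norm_le_norm_add_smul_of_dual hf.le (by simp [hfz, hz]) hfx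

end BirkhoffOrthogonal

theorem stmt_13 {𝕜 X : Type*} [RCLike 𝕜] [NormedAddCommGroup X] [NormedSpace 𝕜 X]
    {z₁ z₂ : X} (hz₁ : ‖z₁‖ = 1) (hz₂ : ‖z₂‖ = 1)
    (hsupp : {f : X →L[𝕜] 𝕜 | ‖f‖ = 1 ∧ f z₁ = 1} = {f : X →L[𝕜] 𝕜 | ‖f‖ = 1 ∧ f z₂ = 1}) :
    {x : X | ∀ l : 𝕜, ‖z₁ + l • x‖ ≥ ‖z₁‖} = {x : X | ∀ l : 𝕜, ‖z₂ + l • x‖ ≥ ‖z₂‖} := by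
  ext x
  simp only [Set.mem_ofPred_eq, birkhoffOrthogonal_iff_exists_supporting_dual hz₁,
    birkhoffOrthogonal_iff_exists_supporting_dual hz₂]
  exact exists_congr fun f ↦ and_congr_left' (Set.ext_iff.mp hsupp f)
end

section
/- In every n-dimensional normed space (n ≥ 2) over ℝ or ℂ there exist n unit vectors that are pairwise mutually Birkhoff–James orthogonal, i.e., unit vectors y₁,…,y_n with y_i ⊥ y_j for all i ≠ j. These vectors can be chosen as maximizers of |det(x₁,…,x_n)| over n-tuples of unit vectors. -/
/-!
Let `y` maximise `‖f y‖` over tuples of unit vectors, for an alternating form `f` with `f y ≠ 0`.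
Replacing `y i` by `v = y i + λ • y j` does not change `f y`, while homogeneity gives
`‖f x‖ ≤ ‖f y‖ * ∏ i, ‖x i‖` for every tuple `x`. Hence `‖f y‖ ≤ ‖f y‖ * ‖v‖`,
that is `‖v‖ ≥ 1 = ‖y i‖`.
-/

open Function Set Metric

theorem AlternatingMap.map_update_add_smul {R M N ι : Type*} [Semiring R] [AddCommMonoid M]
    [Module R M] [AddCommMonoid N] [Module R N] [DecidableEq ι] (f : M [⋀^ι]→ₗ[R] N)
    (v : ι → M) {i j : ι} (hij : i ≠ j) (r : R) :
    f (update v i (v i + r • v j)) = f v := by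
  rw [f.map_update_add, f.map_update_smul, f.map_update_self v hij, smul_zero, add_zero,
    update_eq_self]

theorem Module.Basis.continuous_det {𝕜 X ι : Type*} [NontriviallyNormedField 𝕜] [CompleteSpace 𝕜]
    [NormedAddCommGroup X] [NormedSpace 𝕜 X] [Fintype ι] [DecidableEq ι]
    (b : Module.Basis ι 𝕜 X) : Continuous b.det := by
  rw [show ⇑b.det = fun v => (b.toMatrix v).det from funext b.det_apply]
  refine Continuous.matrix_det (continuous_pi fun i => continuous_pi fun j => ?_)
  exact ((continuous_apply i).comp b.equivFunL.continuous).comp (continuous_apply j)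

section UnitTuples

variable {𝕜 X F ι : Type*} [RCLike 𝕜] [NormedAddCommGroup X] [NormedSpace 𝕜 X]
  [NormedAddCommGroup F] [NormedSpace 𝕜 F] [Fintype ι]

theorem MultilinearMap.norm_map_eq_prod_norm_mul (f : MultilinearMap 𝕜 (fun _ : ι => X) F)
    {x : ι → X} (hx : ∀ i, x i ≠ 0) :
    ‖f x‖ = (∏ i, ‖x i‖) * ‖f fun i => (‖x i‖⁻¹ : 𝕜) • x i‖ := by
  have hprod : ∏ i, ‖x i‖ ≠ 0 := Finset.prod_ne_zero_iff.2 fun i _ => norm_ne_zero_iff.2 (hx i)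
  rw [f.map_smul_univ, norm_smul, norm_prod]
  simp only [norm_inv, RCLike.norm_ofReal, abs_norm]
  rw [Finset.prod_inv_distrib, mul_inv_cancel_left₀ hprod]

theorem MultilinearMap.norm_map_le_mul_prod_norm_of_isMaxOn
    (f : MultilinearMap 𝕜 (fun _ : ι => X) F) {y : ι → X}
    (hy : IsMaxOn (‖f ·‖) (univ.pi fun _ => sphere 0 1) y) (x : ι → X) :
    ‖f x‖ ≤ ‖f y‖ * ∏ i, ‖x i‖ := by
  by_cases hx : ∃ i, x i = 0
  · obtain ⟨i, hi⟩ := hx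
    rw [f.map_coord_zero i hi, norm_zero]
    positivity
  · have hx : ∀ i, x i ≠ 0 := not_exists.1 hx
    rw [f.norm_map_eq_prod_norm_mul hx, mul_comm]
    gcongr
    exact hy fun i _ => by simpa using norm_smul_inv_norm (𝕜 := 𝕜) (hx i)

theorem MultilinearMap.exists_isMaxOn_norm_ne_zero [FiniteDimensional 𝕜 X]
    (f : MultilinearMap 𝕜 (fun _ : ι => X) F) (hf : Continuous f) (hf0 : f ≠ 0) :
    ∃ y ∈ univ.pi fun _ => sphere (0 : X) 1,
      IsMaxOn (‖f ·‖) (univ.pi fun _ => sphere 0 1) y ∧ f y ≠ 0 := by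
  obtain ⟨x, hx⟩ : ∃ x, f x ≠ 0 := by
    by_contra! h
    exact hf0 (MultilinearMap.ext h)
  have hx0 : ∀ i, x i ≠ 0 := fun i hi => hx (f.map_coord_zero i hi)
  have hu : (fun i => (‖x i‖⁻¹ : 𝕜) • x i) ∈ univ.pi fun _ => sphere (0 : X) 1 :=
    fun i _ => by simpa using norm_smul_inv_norm (𝕜 := 𝕜) (hx0 i)
  have hfu : f (fun i => (‖x i‖⁻¹ : 𝕜) • x i) ≠ 0 := by
    intro h
    apply hx
    simpa [h] using f.norm_map_eq_prod_norm_mul hx0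
  have := FiniteDimensional.proper_rclike 𝕜 X
  obtain ⟨y, hyS, hy⟩ := (isCompact_univ_pi fun _ => isCompact_sphere (0 : X) 1).exists_isMaxOn
    ⟨_, hu⟩ hf.norm.continuousOn
  refine ⟨y, hyS, hy, fun h => hfu ?_⟩
  simpa [h] using hy hu

theorem AlternatingMap.norm_le_norm_add_smul_of_isMaxOn (f : X [⋀^ι]→ₗ[𝕜] F) {y : ι → X}
    (hyS : y ∈ univ.pi fun _ => sphere (0 : X) 1)
    (hy : IsMaxOn (‖f ·‖) (univ.pi fun _ => sphere 0 1) y) (hfy : f y ≠ 0)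
    {i j : ι} (hij : i ≠ j) (l : 𝕜) : ‖y i‖ ≤ ‖y i + l • y j‖ := by
  classical
  have hunit : ∀ k, ‖y k‖ = 1 := by simpa using hyS
  have hbound := f.toMultilinearMap.norm_map_le_mul_prod_norm_of_isMaxOn hy
    (update y i (y i + l • y j))
  rw [Finset.prod_eq_single i (fun k _ hk => by rw [update_of_ne hk, hunit k]) (by simp),
    update_self] at hbound
  rw [hunit i, ← le_mul_iff_one_le_right (norm_pos_iff.2 hfy)]
  simpa only [AlternatingMap.coe_multilinearMap, f.map_update_add_smul y hij] using hbound

end UnitTuples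

theorem stmt_15_general {𝕜 X : Type*} [RCLike 𝕜] [NormedAddCommGroup X] [NormedSpace 𝕜 X]
    {n : ℕ} (b : Module.Basis (Fin n) 𝕜 X) :
    ∃ y : Fin n → X, (∀ i, ‖y i‖ = 1) ∧
      (∀ x : Fin n → X, (∀ i, ‖x i‖ = 1) → ‖b.det x‖ ≤ ‖b.det y‖) ∧
      (∀ i j, i ≠ j → ∀ l : 𝕜, ‖y i + l • y j‖ ≥ ‖y i‖) := by
  have : FiniteDimensional 𝕜 X := b.finiteDimensional_of_finite
  obtain ⟨y, hyS, hymax, hy0⟩ := b.det.toMultilinearMap.exists_isMaxOn_norm_ne_zero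
    b.continuous_det (AlternatingMap.coe_multilinearMap_injective.ne b.det_ne_zero)
  refine ⟨y, by simpa using hyS, fun x hx => hymax (by simpa using hx), ?_⟩
  exact fun i j hij l => b.det.norm_le_norm_add_smul_of_isMaxOn hyS hymax hy0 hij l

theorem stmt_15 {𝕜 X : Type*} [RCLike 𝕜] [NormedAddCommGroup X] [NormedSpace 𝕜 X]
    {n : ℕ} (hn : 2 ≤ n) [FiniteDimensional 𝕜 X] (hdim : Module.finrank 𝕜 X = n)
    (b : Module.Basis (Fin n) 𝕜 X) :
    ∃ y : Fin n → X, (∀ i, ‖y i‖ = 1) ∧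
      (∀ x : Fin n → X, (∀ i, ‖x i‖ = 1) → ‖b.det x‖ ≤ ‖b.det y‖) ∧
      (∀ i j, i ≠ j → ∀ l : 𝕜, ‖y i + l • y j‖ ≥ ‖y i‖) :=
  stmt_15_general b
end

section
/- If a ring homomorphism σ: ℂ → ℂ is bounded on the closed unit disk, then σ is continuous, hence the identity or complex conjugation. -/
theorem stmt_17 (σ : ℂ →+* ℂ)
    (hbdd : ∃ C : ℝ, ∀ z : ℂ, ‖z‖ ≤ 1 → ‖σ z‖ ≤ C) :
    Continuous σ ∧ ((∀ z : ℂ, σ z = z) ∨ (∀ z : ℂ, σ z = starRingEnd ℂ z)) := by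
  obtain ⟨C, hC⟩ := hbdd
  have hC1 : (1:ℝ) ≤ C := by
    have := hC 1 (by simp)
    simpa using this
  -- key bound: for 0 < ‖z‖ ≤ 1/2, ‖σ z‖ ≤ 2*C*‖z‖
  have key : ∀ z : ℂ, z ≠ 0 → ‖z‖ ≤ 1/2 → ‖σ z‖ ≤ 2 * C * ‖z‖ := by
    intro z hz hz2
    have hzpos : 0 < ‖z‖ := norm_pos_iff.2 hz
    set n : ℕ := ⌊‖z‖⁻¹⌋₊ with hn
    have hinv2 : (2:ℝ) ≤ ‖z‖⁻¹ := by
      rw [le_inv_comm₀ (by norm_num) hzpos]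
      linarith
    have hfl : (n:ℝ) ≤ ‖z‖⁻¹ := Nat.floor_le (by positivity)
    have hfl2 : ‖z‖⁻¹ < (n:ℝ) + 1 := Nat.lt_floor_add_one _
    have hnge : ‖z‖⁻¹ / 2 ≤ (n:ℝ) := by linarith
    have hnpos : 0 < (n:ℝ) := by linarith [hinv2]
    have hb : ‖σ ((n:ℂ) * z)‖ ≤ C := by
      apply hC
      rw [norm_mul]
      calc ‖(n:ℂ)‖ * ‖z‖ = (n:ℝ) * ‖z‖ := by simp
        _ ≤ ‖z‖⁻¹ * ‖z‖ := by apply mul_le_mul_of_nonneg_right hfl (norm_nonneg _)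
        _ = 1 := inv_mul_cancel₀ (ne_of_gt hzpos)
    have hσn : σ ((n:ℂ) * z) = (n:ℂ) * σ z := by
      rw [map_mul, map_natCast]
    rw [hσn, norm_mul] at hb
    have : (n:ℝ) * ‖σ z‖ ≤ C := by simpa using hb
    have h1 : ‖σ z‖ ≤ C / n := by
      rw [le_div_iff₀ hnpos]; linarith [this]
    calc ‖σ z‖ ≤ C / n := h1
      _ ≤ C / (‖z‖⁻¹ / 2) := by
          apply div_le_div_of_nonneg_left (by linarith) (by positivity) hnge
      _ = 2 * C * ‖z‖ := by field_simp
  have hcont : Continuous σ := by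
    apply continuous_of_continuousAt_zero σ
    rw [ContinuousAt, map_zero]
    rw [Metric.tendsto_nhds_nhds]
    intro ε hε
    refine ⟨min (1/2) (ε / (2 * C)), lt_min (by norm_num) (by positivity), ?_⟩
    intro z hz
    rw [dist_zero_right] at hz
    rw [dist_zero_right]
    by_cases h0 : z = 0
    · simpa [h0] using hε
    · have h1 : ‖z‖ ≤ 1/2 := le_of_lt (lt_of_lt_of_le hz (min_le_left _ _))
      have h2 : ‖z‖ < ε / (2 * C) := lt_of_lt_of_le hz (min_le_right _ _)
      calc ‖σ z‖ ≤ 2 * C * ‖z‖ := key z h0 h1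
        _ < 2 * C * (ε / (2 * C)) := by
            apply mul_lt_mul_of_pos_left h2 (by positivity)
        _ = ε := by field_simp
  refine ⟨hcont, ?_⟩
  rcases Complex.ringHom_eq_id_or_conj_of_continuous hcont with h | h
  · left; intro z; rw [h]; rfl
  · right; intro z; rw [h]
end

section
/- Let X be a smooth and strictly convex reflexive Banach space. The map sending each nonzero x to its unique supporting functional f_x reverses Birkhoff–James orthogonality: x ⊥ y in X if and only if f_y ⊥ f_x in X*. -/
/-!
By James's characterisation, `a ⊥ b` holds iff some norm-one functional norming `a` vanishes
at `b`. At a smooth point `x` that functional can only be `f_x`, so `x ⊥ y ↔ f_x y = 0`.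
Dually, in a reflexive space the norming functionals of `f_y ∈ X*` are evaluations at unit
vectors `u` with `f_y u = 1`, and strict convexity forces `u = y / ‖y‖`; hence
`f_y ⊥ f_x ↔ f_x y = 0` as well.
-/

open NormedSpace

def BirkhoffJamesOrthogonal (𝕜 : Type*) {E : Type*} [Norm E] [Add E] [SMul 𝕜 E] (a b : E) :
    Prop :=
  ∀ l : 𝕜, ‖a‖ ≤ ‖a + l • b‖

section

variable {𝕜 E : Type*} [RCLike 𝕜] [NormedAddCommGroup E] [NormedSpace 𝕜 E]

theorem birkhoffJamesOrthogonal_of_apply_eq_zero {a b : E} {f : E →L[𝕜] 𝕜} (hf : ‖f‖ ≤ 1)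
    (ha : ‖a‖ ≤ ‖f a‖) (hb : f b = 0) : BirkhoffJamesOrthogonal 𝕜 a b := fun l =>
  calc ‖a‖ ≤ ‖f (a + l • b)‖ := by simpa [hb] using ha
    _ ≤ ‖f‖ * ‖a + l • b‖ := f.le_opNorm _
    _ ≤ ‖a + l • b‖ := mul_le_of_le_one_left (norm_nonneg _) hf

theorem norm_mkQ_span_singleton_of_birkhoffJamesOrthogonal {a b : E}
    (h : BirkhoffJamesOrthogonal 𝕜 a b) : ‖(𝕜 ∙ b).mkQ a‖ = ‖a‖ := by
  refine le_antisymm (Submodule.Quotient.norm_mk_le _ a)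
    (QuotientAddGroup.le_norm_iff.2 fun m hm => ?_)
  obtain ⟨l, hl⟩ := Submodule.mem_span_singleton.1 ((Submodule.Quotient.eq _).1 hm)
  simpa [hl] using h l

theorem BirkhoffJamesOrthogonal.exists_dual {a b : E} (h : BirkhoffJamesOrthogonal 𝕜 a b)
    (ha : a ≠ 0) : ∃ f : E →L[𝕜] 𝕜, ‖f‖ = 1 ∧ f a = ‖a‖ ∧ f b = 0 := by
  set S := 𝕜 ∙ b
  have hnorm : ‖S.mkQ a‖ = ‖a‖ := norm_mkQ_span_singleton_of_birkhoffJamesOrthogonal h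
  obtain ⟨g, hg, hga⟩ := exists_dual_vector 𝕜 (S.mkQ a)
    (hnorm.trans_ne (norm_pos_iff.2 ha).ne')
  have hmkQ : ‖S.mkQL‖ ≤ 1 := ContinuousLinearMap.opNorm_le_bound _ zero_le_one fun z => by
    simpa using Submodule.Quotient.norm_mk_le S z
  have hfa : (g ∘L S.mkQL) a = ‖a‖ := by
    rw [ContinuousLinearMap.comp_apply, Submodule.mkQL_apply, hga, hnorm]
  have hf : ‖g ∘L S.mkQL‖ ≤ 1 :=
    (g.opNorm_comp_le _).trans (by simpa [hg] using hmkQ)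
  refine ⟨g ∘L S.mkQL, le_antisymm hf ?_, hfa, ?_⟩
  · have := (g ∘L S.mkQL).le_opNorm a
    rw [hfa, RCLike.norm_ofReal, abs_norm] at this
    exact one_le_of_le_mul_right₀ (norm_pos_iff.2 ha) (by simpa using this)
  · simp [(Submodule.Quotient.mk_eq_zero S).2 (Submodule.mem_span_singleton_self b)]

theorem birkhoffJamesOrthogonal_iff_apply_eq_zero {x : E} (hx : x ≠ 0)
    (hsmooth : ∃! f : E →L[𝕜] 𝕜, ‖f‖ = 1 ∧ f x = ‖x‖) {f : E →L[𝕜] 𝕜}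
    (hf : ‖f‖ = 1 ∧ f x = ‖x‖) (y : E) : BirkhoffJamesOrthogonal 𝕜 x y ↔ f y = 0 := by
  refine ⟨fun h => ?_, fun hy => birkhoffJamesOrthogonal_of_apply_eq_zero hf.1.le
    (by simp [hf.2]) hy⟩
  obtain ⟨g, hg, hgx, hgy⟩ := h.exists_dual hx
  rwa [hsmooth.unique hf ⟨hg, hgx⟩]

theorem eq_of_apply_eq_one_of_norm_add_lt_two
    (hsc : ∀ u v : E, ‖u‖ = 1 → ‖v‖ = 1 → u ≠ v → ‖u + v‖ < 2) {f : E →L[𝕜] 𝕜} (hf : ‖f‖ ≤ 1)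
    {u v : E} (hu : ‖u‖ = 1) (hv : ‖v‖ = 1) (hfu : f u = 1) (hfv : f v = 1) : u = v := by
  by_contra huv
  have : (2 : ℝ) ≤ ‖u + v‖ :=
    calc (2 : ℝ) = ‖f (u + v)‖ := by norm_num [hfu, hfv]
      _ ≤ ‖f‖ * ‖u + v‖ := f.le_opNorm _
      _ ≤ ‖u + v‖ := mul_le_of_le_one_left (norm_nonneg _) hf
  exact (hsc u v hu hv huv).not_ge this

/-- The dual of `birkhoffJamesOrthogonal_iff_apply_eq_zero`: reflexivity and strict convexity of
`E` make every `g ∈ E*` attaining its norm a smooth point of `E*`. -/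
theorem birkhoffJamesOrthogonal_dual_iff_apply_eq_zero
    (hrefl : Function.Surjective (inclusionInDoubleDual 𝕜 E))
    (hsc : ∀ u v : E, ‖u‖ = 1 → ‖v‖ = 1 → u ≠ v → ‖u + v‖ < 2) {g : E →L[𝕜] 𝕜} (hg : ‖g‖ = 1)
    {v : E} (hv : ‖v‖ = 1) (hgv : g v = 1) (h : E →L[𝕜] 𝕜) :
    BirkhoffJamesOrthogonal 𝕜 g h ↔ h v = 0 := by
  refine ⟨fun hgh => ?_, fun hhv => birkhoffJamesOrthogonal_of_apply_eq_zero
    ((double_dual_bound 𝕜 E v).trans hv.le) (by simp [hg, hgv]) hhv⟩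
  obtain ⟨Φ, hΦ, hΦg, hΦh⟩ := hgh.exists_dual (by rintro rfl; simp at hg)
  obtain ⟨u, rfl⟩ := hrefl Φ
  have hu : ‖u‖ = 1 := ((inclusionInDoubleDualLi 𝕜).norm_map u).symm.trans hΦ
  have hgu : g u = 1 := by simpa [hg] using hΦg
  rwa [← eq_of_apply_eq_one_of_norm_add_lt_two hsc hg.le hu hv hgu hgv]

end

theorem stmt_18_general {𝕜 X : Type*} [RCLike 𝕜] [NormedAddCommGroup X] [NormedSpace 𝕜 X]
    (hrefl : Function.Surjective (NormedSpace.inclusionInDoubleDual 𝕜 X))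
    (hsmooth : ∀ x : X, x ≠ 0 → ∃! f : X →L[𝕜] 𝕜, ‖f‖ = 1 ∧ f x = (‖x‖ : 𝕜))
    (hsc : ∀ u v : X, ‖u‖ = 1 → ‖v‖ = 1 → u ≠ v → ‖u + v‖ < 2)
    {x y : X} (hx : x ≠ 0) (hy : y ≠ 0)
    {fx fy : X →L[𝕜] 𝕜} (hfx : ‖fx‖ = 1 ∧ fx x = (‖x‖ : 𝕜))
    (hfy : ‖fy‖ = 1 ∧ fy y = (‖y‖ : 𝕜)) :
    (∀ l : 𝕜, ‖x + l • y‖ ≥ ‖x‖) ↔ (∀ l : 𝕜, ‖fy + l • fx‖ ≥ ‖fy‖) := by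
  change BirkhoffJamesOrthogonal 𝕜 x y ↔ BirkhoffJamesOrthogonal 𝕜 fy fx
  have hfy_unit : fy ((‖y‖⁻¹ : 𝕜) • y) = 1 := by simp [hfy.2, hy]
  rw [birkhoffJamesOrthogonal_iff_apply_eq_zero hx (hsmooth x hx) hfx,
    birkhoffJamesOrthogonal_dual_iff_apply_eq_zero hrefl hsc hfy.1 (norm_smul_inv_norm hy)
      hfy_unit]
  simp [hy]

theorem stmt_18 {𝕜 X : Type*} [RCLike 𝕜] [NormedAddCommGroup X] [NormedSpace 𝕜 X]
    [CompleteSpace X]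
    (hrefl : Function.Surjective (NormedSpace.inclusionInDoubleDual 𝕜 X))
    (hsmooth : ∀ x : X, x ≠ 0 → ∃! f : X →L[𝕜] 𝕜, ‖f‖ = 1 ∧ f x = (‖x‖ : 𝕜))
    (hsc : ∀ u v : X, ‖u‖ = 1 → ‖v‖ = 1 → u ≠ v → ‖u + v‖ < 2)
    {x y : X} (hx : x ≠ 0) (hy : y ≠ 0)
    {fx fy : X →L[𝕜] 𝕜} (hfx : ‖fx‖ = 1 ∧ fx x = (‖x‖ : 𝕜))
    (hfy : ‖fy‖ = 1 ∧ fy y = (‖y‖ : 𝕜)) :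
    (∀ l : 𝕜, ‖x + l • y‖ ≥ ‖x‖) ↔ (∀ l : 𝕜, ‖fy + l • fx‖ ≥ ‖fy‖) :=
  stmt_18_general hrefl hsmooth hsc hx hy hfx hfy
end

section
/- In a normed space X with dim X ≥ 3, for every nonzero x ∈ X there exist infinitely many pairwise non-parallel nonzero vectors y with y ⊥ x (Birkhoff–James). -/
/-!
Pick `y₁, y₂` whose images in `X ⧸ 𝕜 ∙ x` are linearly independent (possible as `dim X ≥ 3`).
For each `c`, the continuous coercive function `t ↦ ‖y₁ + c • y₂ + t • x‖` attains its minimum at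
some `t c`, and the minimiser `z c := y₁ + c • y₂ + t c • x` is Birkhoff–James orthogonal to `x`.
Modulo `x`, `z c` is `y₁ + c • y₂`, so distinct `c` give non-parallel nonzero vectors.
-/

open Filter Submodule

theorem exists_add_smul_forall_norm_le_norm_add_smul {𝕜 X : Type*} [NontriviallyNormedField 𝕜]
    [ProperSpace 𝕜] [NormedAddCommGroup X] [NormedSpace 𝕜 X] {x : X} (hx : x ≠ 0) (y : X) :
    ∃ t : 𝕜, ∀ l : 𝕜, ‖y + t • x‖ ≤ ‖y + t • x + l • x‖ := by
  have hcoercive : Tendsto (fun s : 𝕜 => ‖y + s • x‖) (cocompact 𝕜) atTop := by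
    refine tendsto_atTop_mono (fun s => ?_)
      (tendsto_atTop_add_const_right _ (-‖y‖)
        (tendsto_norm_cocompact_atTop.atTop_mul_const (norm_pos_iff.2 hx)))
    have := norm_sub_norm_le (s • x) (-y)
    rw [norm_smul, norm_neg, sub_neg_eq_add, add_comm] at this
    linarith
  obtain ⟨t, ht⟩ :=
    (by fun_prop : Continuous fun s : 𝕜 => ‖y + s • x‖).exists_forall_le hcoercive
  exact ⟨t, fun l => by simpa only [add_assoc, ← add_smul] using ht (t + l)⟩

section

variable {K V : Type*} [Field K] [AddCommGroup V] [Module K V]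

theorem exists_linearIndependent_pair_quotient_span_singleton
    (hrank : 3 ≤ Module.rank K V) (x : V) :
    ∃ u v : V ⧸ K ∙ x, LinearIndependent K ![u, v] := by
  have hline : Module.rank K (K ∙ x) ≤ 1 := (rank_span_le _).trans (by simp)
  have hquot : 1 < Module.rank K (V ⧸ K ∙ x) := by
    by_contra! h
    have : (3 : Cardinal) ≤ 1 + 1 :=
      hrank.trans (rank_quotient_add_rank_of_divisionRing (K ∙ x) ▸ add_le_add h hline)
    norm_num at this
  obtain ⟨u, hu⟩ := rank_pos_iff_exists_ne_zero.1 (zero_lt_one.trans hquot)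
  exact ⟨u, exists_linearIndependent_pair_of_one_lt_rank hquot hu⟩

namespace LinearIndependent

variable {u v : V}

theorem add_smul_ne_zero (huv : LinearIndependent K ![u, v]) (c : K) : u + c • v ≠ 0 := fun h =>
  one_ne_zero (LinearIndependent.pair_iff.1 huv 1 c (by rw [one_smul, h])).1

theorem eq_of_add_smul_eq_smul_add_smul (huv : LinearIndependent K ![u, v]) {a c c' : K}
    (h : u + c' • v = a • (u + c • v)) : a = 1 ∧ c' = c := by
  obtain ⟨h₁, h₂⟩ := LinearIndependent.pair_iff.1 huv (1 - a) (c' - a * c) (by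
    linear_combination (norm := module) h)
  obtain rfl : a = 1 := (sub_eq_zero.1 h₁).symm
  exact ⟨rfl, by simpa [sub_eq_zero] using h₂⟩

end LinearIndependent

end

theorem stmt_19 {𝕜 X : Type*} [RCLike 𝕜] [NormedAddCommGroup X] [NormedSpace 𝕜 X]
    (hdim : (3 : Cardinal) ≤ Module.rank 𝕜 X) {x : X} (hx : x ≠ 0) :
    ∃ Y : Set X, Y.Infinite ∧
      (∀ y ∈ Y, y ≠ 0 ∧ ∀ l : 𝕜, ‖y + l • x‖ ≥ ‖y‖) ∧
      (∀ y ∈ Y, ∀ y' ∈ Y, y ≠ y' → ¬ ∃ c : 𝕜, y' = c • y) := by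
  set π := (𝕜 ∙ x).mkQ
  obtain ⟨u, v, huv⟩ := exists_linearIndependent_pair_quotient_span_singleton hdim x
  obtain ⟨y₁, rfl⟩ := (𝕜 ∙ x).mkQ_surjective u
  obtain ⟨y₂, rfl⟩ := (𝕜 ∙ x).mkQ_surjective v
  choose t ht using fun c : 𝕜 =>
    exists_add_smul_forall_norm_le_norm_add_smul (𝕜 := 𝕜) hx (y₁ + c • y₂)
  set z : 𝕜 → X := fun c => y₁ + c • y₂ + t c • x
  have hz : ∀ c, π (z c) = π y₁ + c • π y₂ := fun c => by
    simp [π, z, (Quotient.mk_eq_zero _).2 (mem_span_singleton_self x)]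
  have hparallel : ∀ {c c' a : 𝕜}, z c' = a • z c → c' = c := fun h =>
    (huv.eq_of_add_smul_eq_smul_add_smul (by rw [← hz, ← hz, h, map_smul])).2
  have hinj : Function.Injective z := fun c c' h =>
    (hparallel (a := 1) (by rw [one_smul, h])).symm
  refine ⟨Set.range z, Set.infinite_range_of_injective hinj, ?_, ?_⟩
  · rintro _ ⟨c, rfl⟩
    exact ⟨fun h => huv.add_smul_ne_zero c (by rw [← hz, h, map_zero]), ht c⟩
  · rintro _ ⟨c, rfl⟩ _ ⟨c', rfl⟩ hne ⟨a, ha⟩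
    exact hne (congrArg z (hparallel ha).symm)
end
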